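/- There is no uniform window bound for the direct bounded window objective in Markov chains: in the chain of the previous context, sup over runs reaching t of the minimal λ for which the run satisfies DFW(λ) is infinite (for every λ there is a run of positive probability requiring window size larger than λ), even though almost every run satisfies DFW(λ) for some finite λ. -/

import Mathlib

open MeasureTheory

/-- Transition matrix of the two-state Markov chain: `s → s` w.p. 1/2,
`s → t` w.p. 1/2, `t` absorbing. -/
noncomputable def P2 : Fin 2 → Fin 2 → ENNReal := ![![1/2, 1/2], ![0, 1]]

/-! A run that stays in `s` for `λ + 1` steps and then jumps to `t` is a cylinder of
probability `2^-(λ+1) > 0`, and it needs a window larger than `λ`. On the other hand the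
runs that never reach `t` lie in every cylinder "stay in `s` for `n` steps", whose
probability `2^-n` tends to `0`, so almost every run reaches `t` and hence satisfies
`DFW(λ)` for a large enough `λ`. -/

def IsMarkovFrom {α : Type*} [MeasurableSpace α] (μ : Measure (ℕ → α)) (P : α → α → ENNReal)
    (s : α) : Prop :=
  ∀ (n : ℕ) (f : ℕ → α), f 0 = s →
    μ {ρ | ∀ i ≤ n, ρ i = f i} = ∏ i ∈ Finset.range n, P (f i) (f (i + 1))

namespace IsMarkovFrom

variable {α : Type*} [MeasurableSpace α] {μ : Measure (ℕ → α)} {P : α → α → ENNReal} {s : α}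

theorem measure_stay (h : IsMarkovFrom μ P s) (n : ℕ) :
    μ {ρ | ∀ i ≤ n, ρ i = s} = P s s ^ n := by
  simpa using h n (fun _ => s) rfl

theorem measure_stay_then_jump (h : IsMarkovFrom μ P s) (n : ℕ) (t : α) :
    μ {ρ | ∀ i ≤ n + 1, ρ i = if i ≤ n then s else t} = P s s ^ n * P s t := by
  rw [h (n + 1) (fun i => if i ≤ n then s else t) (by simp), Finset.prod_range_succ,
    if_pos le_rfl, if_neg (Nat.lt_irrefl n ∘ Nat.lt_of_succ_le)]
  congr 1
  rw [Finset.prod_congr rfl fun i hi => ?_, Finset.prod_const, Finset.card_range]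
  have hi : i + 1 ≤ n := Finset.mem_range.mp hi
  rw [if_pos (Nat.le_of_succ_le hi), if_pos hi]

theorem measure_stay_forever (h : IsMarkovFrom μ P s) (hP : P s s < 1) :
    μ {ρ | ∀ i, ρ i = s} = 0 := by
  refine nonpos_iff_eq_zero.mp <|
    ge_of_tendsto' (ENNReal.tendsto_pow_atTop_nhds_zero_of_lt_one hP) fun n => ?_
  rw [← h.measure_stay n]
  exact measure_mono fun ρ hρ i _ => hρ i

end IsMarkovFrom

/-- No uniform window bound: for every `λ` there is a positive-probability set
of runs reaching `t` but not satisfying `DFW(λ)`, although almost every run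
satisfies `DFW(λ)` for some finite `λ`. -/
theorem no_uniform_window_bound (μ : Measure (ℕ → Fin 2)) [IsProbabilityMeasure μ]
    (hμ : ∀ (n : ℕ) (f : ℕ → Fin 2), f 0 = 0 →
      μ {ρ | ∀ i ≤ n, ρ i = f i} = ∏ i ∈ Finset.range n, P2 (f i) (f (i + 1))) :
    (∀ lam : ℕ, 1 ≤ lam →
      0 < μ {ρ | (∃ n, ρ n = 1) ∧ ¬ ∃ l, l ≤ lam - 1 ∧ ρ l = 1}) ∧
    μ {ρ : ℕ → Fin 2 | ∃ lam : ℕ, 1 ≤ lam ∧ ∃ l, l ≤ lam - 1 ∧ ρ l = 1} = 1 := by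
  have hchain : IsMarkovFrom μ P2 0 := hμ
  constructor
  · intro lam _
    have hlate : {ρ | ∀ i ≤ lam + 1, ρ i = if i ≤ lam then 0 else 1}
        ⊆ {ρ : ℕ → Fin 2 | (∃ n, ρ n = 1) ∧ ¬ ∃ l, l ≤ lam - 1 ∧ ρ l = 1} := by
      refine fun ρ hρ => ⟨⟨lam + 1, by simpa using hρ (lam + 1) le_rfl⟩, ?_⟩
      rintro ⟨l, hl, hρl⟩
      have hl' : l ≤ lam := hl.trans (Nat.sub_le _ _)
      simp [hρ l (Nat.le_succ_of_le hl'), hl'] at hρl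
    refine lt_of_lt_of_le ?_ (measure_mono hlate)
    rw [hchain.measure_stay_then_jump]
    simp [P2, ENNReal.pow_pos]
  · have hnever : {ρ : ℕ → Fin 2 | ∃ lam : ℕ, 1 ≤ lam ∧ ∃ l, l ≤ lam - 1 ∧ ρ l = 1}ᶜ
        ⊆ {ρ | ∀ i, ρ i = 0} := fun ρ hρ i => by
      have : ρ i ≠ 1 := fun h => hρ ⟨i + 1, by omega, i, by omega, h⟩
      omega
    refine (measure_congr (ae_eq_univ.mpr (measure_mono_null hnever ?_))).trans measure_univ
    exact hchain.measure_stay_forever (by simp [P2])
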